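/- Let q and r be prime powers, let F be a finite field with q² elements with field involution σ : x ↦ x^q, and let F' be a finite field with r² elements with field involution σ' : x ↦ x^r. If the special unitary groups SU₂(F,σ) = {g ∈ SL₂(F) : σ(g)ᵀ · g = 1} and SU₂(F',σ') = {g ∈ SL₂(F') : σ'(g)ᵀ · g = 1} are isomorphic as abstract groups, then q = r. -/

import Mathlib

open Matrix in
/-- The special unitary group `SU₂(F,σ) = {g ∈ SL₂(F) : σ(g)ᵀ · g = 1}`, where the
field involution `σ` is applied entrywise. -/
def SU₂ {F : Type} [Field F] (σ : F →+* F) :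
    Subgroup (SpecialLinearGroup (Fin 2) F) where
  carrier := {g | ((g : Matrix (Fin 2) (Fin 2) F).map σ)ᵀ * (g : Matrix (Fin 2) (Fin 2) F) = 1}
  one_mem' := by
    simp [Set.mem_setOf_eq, SpecialLinearGroup.coe_one, Matrix.map_one]
  mul_mem' := by
    intro a b ha hb
    simp only [Set.mem_setOf_eq] at ha hb ⊢
    rw [Matrix.SpecialLinearGroup.coe_mul, Matrix.map_mul, Matrix.transpose_mul]
    calc ((b : Matrix (Fin 2) (Fin 2) F).map σ)ᵀ * ((a : Matrix (Fin 2) (Fin 2) F).map σ)ᵀ *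
          ((a : Matrix (Fin 2) (Fin 2) F) * (b : Matrix (Fin 2) (Fin 2) F))
        = ((b : Matrix (Fin 2) (Fin 2) F).map σ)ᵀ *
            (((a : Matrix (Fin 2) (Fin 2) F).map σ)ᵀ * (a : Matrix (Fin 2) (Fin 2) F)) *
            (b : Matrix (Fin 2) (Fin 2) F) := by noncomm_ring
      _ = 1 := by rw [ha, mul_one, hb]
  inv_mem' := by
    intro g hg
    simp only [Set.mem_setOf_eq] at hg ⊢
    have hBC : (g : Matrix (Fin 2) (Fin 2) F) * ((g⁻¹ : SpecialLinearGroup (Fin 2) F) :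
        Matrix (Fin 2) (Fin 2) F) = 1 := by
      rw [← Matrix.SpecialLinearGroup.coe_mul, mul_inv_cancel, Matrix.SpecialLinearGroup.coe_one]
    have h3 : (((g⁻¹ : SpecialLinearGroup (Fin 2) F) : Matrix (Fin 2) (Fin 2) F).map σ)ᵀ *
        ((g : Matrix (Fin 2) (Fin 2) F).map σ)ᵀ = 1 := by
      rw [← Matrix.transpose_mul, ← Matrix.map_mul, hBC,
        Matrix.map_one σ (map_zero σ) (map_one σ), Matrix.transpose_one]
    calc (((g⁻¹ : SpecialLinearGroup (Fin 2) F) : Matrix (Fin 2) (Fin 2) F).map σ)ᵀ *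
          ((g⁻¹ : SpecialLinearGroup (Fin 2) F) : Matrix (Fin 2) (Fin 2) F)
        = (((g⁻¹ : SpecialLinearGroup (Fin 2) F) : Matrix (Fin 2) (Fin 2) F).map σ)ᵀ *
            (((g : Matrix (Fin 2) (Fin 2) F).map σ)ᵀ * (g : Matrix (Fin 2) (Fin 2) F)) *
            ((g⁻¹ : SpecialLinearGroup (Fin 2) F) : Matrix (Fin 2) (Fin 2) F) := by
          rw [hg, mul_one]
      _ = ((((g⁻¹ : SpecialLinearGroup (Fin 2) F) : Matrix (Fin 2) (Fin 2) F).map σ)ᵀ *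
            ((g : Matrix (Fin 2) (Fin 2) F).map σ)ᵀ) *
            ((g : Matrix (Fin 2) (Fin 2) F) *
              ((g⁻¹ : SpecialLinearGroup (Fin 2) F) : Matrix (Fin 2) (Fin 2) F)) := by
          noncomm_ring
      _ = 1 := by rw [h3, hBC, one_mul]

/-!
An element of `SU₂(F, σ)` is determined by its first column `(a, c)`, subject only to
`N a + N c = 1` for the norm `N x = x ^ (q + 1)` onto the subfield of order `q`. Since `Fˣ` is
cyclic of order `(q + 1)(q - 1)`, the norm maps onto the nonzero elements of that subfield with
fibres of size `q + 1`, and counting gives `|SU₂(F, σ)| = q³ - q`. The map `q ↦ q³ - q` is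
injective on positive integers.
-/

section RootsOfUnity

open Polynomial

theorem exists_isPrimitiveRoot_of_dvd_card_units {F : Type*} [Field F] [Finite F] {n : ℕ}
    (hn : n ∣ Nat.card Fˣ) : ∃ ζ : F, IsPrimitiveRoot ζ n := by
  have : NeZero n := ⟨by rintro rfl; exact Nat.card_pos.ne' (Nat.eq_zero_of_zero_dvd hn)⟩
  refine card_rootsOfUnity_eq_iff_exists_isPrimitiveRoot.mp ?_
  rw [rootsOfUnity_eq_ker, IsCyclic.card_powMonoidHom_ker, Nat.gcd_eq_right hn]

theorem IsCyclic.exists_pow_eq_of_pow_eq_one {G : Type*} [Group G] [IsCyclic G] [Finite G]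
    {d e : ℕ} (hG : Nat.card G = d * e) (he : e ≠ 0) {y : G} (hy : y ^ e = 1) :
    ∃ x, x ^ d = y := by
  obtain ⟨g, hg⟩ := IsCyclic.exists_monoid_generator (α := G)
  obtain ⟨k, rfl⟩ := Submonoid.mem_powers_iff _ _ |>.mp (hg y)
  have hdk : d * e ∣ k * e := by
    rw [← hG, ← orderOf_eq_card_of_forall_mem_powers hg]
    exact orderOf_dvd_of_pow_eq_one (by rwa [pow_mul])
  obtain ⟨m, rfl⟩ := (Nat.mul_dvd_mul_iff_right (Nat.pos_of_ne_zero he)).mp hdk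
  exact ⟨g ^ m, by rw [← pow_mul, mul_comm]⟩

theorem IsPrimitiveRoot.natCard_pow_eq {R : Type*} [CommRing R] [IsDomain R] {ζ : R} {n : ℕ}
    (hζ : IsPrimitiveRoot ζ n) (hn : 0 < n) {t : R} (ht : t ≠ 0) (hex : ∃ α, α ^ n = t) :
    Nat.card {x : R // x ^ n = t} = n := by
  classical
  calc Nat.card {x : R // x ^ n = t} = Nat.card {x : R // x ∈ (nthRoots n t).toFinset} :=
        Nat.card_congr (Equiv.subtypeEquivRight fun x => by simp [mem_nthRoots hn])
    _ = n := by
      rw [Nat.card_eq_finsetCard, Multiset.toFinset_card_of_nodup (hζ.nthRoots_nodup ht),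
        hζ.card_nthRoots, if_pos hex]

end RootsOfUnity

namespace FiniteField

open Finset

variable {F : Type*} [Field F] [Fintype F] {q : ℕ}

theorem two_le_of_card_eq_sq (hF : Fintype.card F = q ^ 2) : 2 ≤ q := by
  have h := Fintype.one_lt_card (α := F)
  rw [hF] at h
  by_contra! hq
  interval_cases q <;> simp at h

theorem natCard_units_of_card_eq_sq (hF : Fintype.card F = q ^ 2) :
    Nat.card Fˣ = (q + 1) * (q - 1) := by
  have := two_le_of_card_eq_sq hF
  rw [Nat.card_units, Nat.card_eq_fintype_card, hF]
  zify [show 1 ≤ q by omega, show 1 ≤ q ^ 2 by nlinarith]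
  ring

theorem pow_pow_succ_of_card_eq_sq (hF : Fintype.card F = q ^ 2) (a : F) :
    (a ^ (q + 1)) ^ q = a ^ (q + 1) := by
  calc (a ^ (q + 1)) ^ q = a ^ q ^ 2 * a ^ q := by ring
    _ = a ^ (q + 1) := by rw [← hF, pow_card, pow_succ']

theorem natCard_pow_succ_eq (hF : Fintype.card F = q ^ 2) {t : F} (ht : t ≠ 0)
    (htq : t ^ q = t) : Nat.card {x : F // x ^ (q + 1) = t} = q + 1 := by
  have hq := two_le_of_card_eq_sq hF
  have hunits := natCard_units_of_card_eq_sq hF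
  obtain ⟨ζ, hζ⟩ := exists_isPrimitiveRoot_of_dvd_card_units (hunits ▸ dvd_mul_right _ _)
  refine hζ.natCard_pow_eq (by omega) ht ?_
  have ht1 : (Units.mk0 t ht) ^ (q - 1) = 1 := by
    ext
    refine mul_right_cancel₀ ht ?_
    rw [Units.val_pow_eq_pow_val, Units.val_mk0, Units.val_one, one_mul, ← pow_succ,
      Nat.sub_add_cancel (by omega), htq]
  obtain ⟨x, hx⟩ := IsCyclic.exists_pow_eq_of_pow_eq_one hunits (by omega) ht1
  exact ⟨x, by rw [← Units.val_pow_eq_pow_val, hx, Units.val_mk0]⟩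

open Classical in
theorem natCard_pow_succ_eq_sub (hF : Fintype.card F = q ^ 2) (σ : F →+* F)
    (hσ : ∀ x, σ x = x ^ q) (a : F) :
    Nat.card {c : F // c ^ (q + 1) = 1 - a ^ (q + 1)} =
      if a ^ (q + 1) = 1 then 1 else q + 1 := by
  split_ifs with ha
  · simp [ha, pow_eq_zero_iff]
  · refine natCard_pow_succ_eq hF (sub_ne_zero.mpr (Ne.symm ha)) ?_
    rw [← hσ, map_sub, map_one, hσ, pow_pow_succ_of_card_eq_sq hF]

theorem natCard_norm_add_norm_eq_one (hF : Fintype.card F = q ^ 2) (σ : F →+* F)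
    (hσ : ∀ x, σ x = x ^ q) :
    Nat.card {p : F × F // p.1 * σ p.1 + p.2 * σ p.2 = 1} = q ^ 3 - q := by
  classical
  have hq := two_le_of_card_eq_sq hF
  have hnorm : ∀ p : F × F,
      p.1 * σ p.1 + p.2 * σ p.2 = 1 ↔ p.2 ^ (q + 1) = 1 - p.1 ^ (q + 1) := by
    intro p
    rw [hσ, hσ, ← pow_succ', ← pow_succ', eq_sub_iff_add_eq, add_comm]
  have hunit : #{a : F | a ^ (q + 1) = 1} = q + 1 := by
    rw [← Fintype.card_subtype, ← Nat.card_eq_fintype_card]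
    exact natCard_pow_succ_eq hF one_ne_zero (one_pow q)
  have hnonunit : #{a : F | ¬a ^ (q + 1) = 1} = q ^ 2 - (q + 1) := by
    rw [filter_not, card_sdiff_of_subset (filter_subset _ _), hunit, card_univ, hF]
  calc Nat.card {p : F × F // p.1 * σ p.1 + p.2 * σ p.2 = 1}
      = Nat.card (Σ a : F, {c : F // c ^ (q + 1) = 1 - a ^ (q + 1)}) :=
        Nat.card_congr ((Equiv.subtypeEquivRight hnorm).trans
          (Equiv.subtypeProdEquivSigmaSubtype fun a c => c ^ (q + 1) = 1 - a ^ (q + 1)))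
    _ = ∑ a : F, if a ^ (q + 1) = 1 then 1 else (q + 1) := by
        simp only [Nat.card_sigma, natCard_pow_succ_eq_sub hF σ hσ]
    _ = (q + 1) + (q ^ 2 - (q + 1)) * (q + 1) := by
        rw [sum_ite, sum_const, sum_const, hunit, hnonunit, smul_eq_mul, smul_eq_mul, mul_one]
    _ = q ^ 3 - q := by
        zify [show q + 1 ≤ q ^ 2 by nlinarith, show q ≤ q ^ 3 by nlinarith]
        ring

end FiniteField

section SU₂

open Matrix

variable {F : Type} [Field F] {σ : F →+* F}

theorem mem_SU₂_iff_map_transpose_eq_adjugate (g : SpecialLinearGroup (Fin 2) F) :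
    g ∈ SU₂ σ ↔ ((g : Matrix (Fin 2) (Fin 2) F).map σ)ᵀ = adjugate g := by
  obtain ⟨A, hA⟩ := g
  change (A.map σ)ᵀ * A = 1 ↔ (A.map σ)ᵀ = adjugate A
  constructor
  · intro h
    calc (A.map σ)ᵀ = (A.map σ)ᵀ * (A * adjugate A) := by
          rw [mul_adjugate, hA, one_smul, Matrix.mul_one]
      _ = adjugate A := by rw [← Matrix.mul_assoc, h, Matrix.one_mul]
  · intro h
    rw [h, adjugate_mul, hA, one_smul]

theorem mem_SU₂_iff (hσ : Function.Involutive σ) (g : SpecialLinearGroup (Fin 2) F) :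
    g ∈ SU₂ σ ↔ g 1 1 = σ (g 0 0) ∧ g 0 1 = -σ (g 1 0) := by
  rw [mem_SU₂_iff_map_transpose_eq_adjugate, adjugate_fin_two, ← Matrix.ext_iff]
  simp only [Fin.forall_fin_two, transpose_apply, map_apply, of_apply, cons_val_zero,
    cons_val_one, cons_val_fin_one]
  constructor
  · rintro ⟨⟨h₀₀, h₁₀⟩, -, -⟩
    exact ⟨h₀₀.symm, by rw [h₁₀, neg_neg]⟩
  · rintro ⟨h₁₁, h₀₁⟩
    simp [h₁₁, h₀₁, hσ _]

def SU₂.firstColumnEquiv (hσ : Function.Involutive σ) :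
    SU₂ σ ≃ {p : F × F // p.1 * σ p.1 + p.2 * σ p.2 = 1} where
  toFun g :=
    ⟨((g : SpecialLinearGroup (Fin 2) F) 0 0, (g : SpecialLinearGroup (Fin 2) F) 1 0), by
      obtain ⟨h₁₁, h₀₁⟩ := (mem_SU₂_iff hσ _).mp g.2
      have hdet := (g : SpecialLinearGroup (Fin 2) F).det_coe
      rw [det_fin_two, h₁₁, h₀₁] at hdet
      linear_combination hdet⟩
  invFun p := ⟨⟨!![p.1.1, -σ p.1.2; p.1.2, σ p.1.1], by
    rw [det_fin_two_of]; linear_combination p.2⟩, (mem_SU₂_iff hσ _).mpr (by simp)⟩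
  left_inv g := by
    obtain ⟨h₁₁, h₀₁⟩ := (mem_SU₂_iff hσ _).mp g.2
    ext i j
    fin_cases i <;> fin_cases j <;> simp [h₁₁, h₀₁]
  right_inv p := rfl

end SU₂

theorem natCard_SU₂ {F : Type} [Field F] [Fintype F] {q : ℕ} (hF : Fintype.card F = q ^ 2)
    (σ : F →+* F) (hσ : ∀ x, σ x = x ^ q) : Nat.card (SU₂ σ) = q ^ 3 - q := by
  have hinv : Function.Involutive σ := fun x => by
    rw [hσ, hσ, ← pow_mul, ← sq, ← hF, FiniteField.pow_card]
  rw [Nat.card_congr (SU₂.firstColumnEquiv hinv),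
    FiniteField.natCard_norm_add_norm_eq_one hF σ hσ]

theorem strictMonoOn_cube_sub_self : StrictMonoOn (fun n : ℕ => n ^ 3 - n) (Set.Ici 1) := by
  intro a ha b hb hab
  simp only [Set.mem_Ici] at ha hb
  zify [Nat.le_self_pow three_ne_zero a, Nat.le_self_pow three_ne_zero b]
  have hab' : (a : ℤ) < b := by exact_mod_cast hab
  have hpos : 0 < ((b : ℤ) - a) * (b ^ 2 + a * b + a ^ 2 - 1) :=
    mul_pos (by linarith) (by nlinarith)
  linear_combination hpos

open Matrix in
theorem stmt_6_general (q r : ℕ)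
    (F : Type) [Field F] [Fintype F] (hF : Fintype.card F = q ^ 2)
    (F' : Type) [Field F'] [Fintype F'] (hF' : Fintype.card F' = r ^ 2)
    (σ : F →+* F) (hσ : ∀ x, σ x = x ^ q)
    (σ' : F' →+* F') (hσ' : ∀ x, σ' x = x ^ r)
    (h : Nonempty ((SU₂ σ) ≃* (SU₂ σ'))) :
    q = r := by
  obtain ⟨e⟩ := h
  have hq := FiniteField.two_le_of_card_eq_sq hF
  have hr := FiniteField.two_le_of_card_eq_sq hF'
  refine strictMonoOn_cube_sub_self.injOn (Set.mem_Ici.mpr (by omega))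
    (Set.mem_Ici.mpr (by omega)) ?_
  rw [← natCard_SU₂ hF σ hσ, ← natCard_SU₂ hF' σ' hσ']
  exact Nat.card_congr e.toEquiv

open Matrix in
/-- If the special unitary groups `SU₂(F,σ)` and `SU₂(F',σ')`, over finite fields with `q²`
and `r²` elements respectively, are isomorphic as abstract groups, then `q = r`. -/
theorem stmt_6 (q r : ℕ) (hq : IsPrimePow q) (hr : IsPrimePow r)
    (F : Type) [Field F] [Fintype F] (hF : Fintype.card F = q ^ 2)
    (F' : Type) [Field F'] [Fintype F'] (hF' : Fintype.card F' = r ^ 2)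
    (σ : F →+* F) (hσ : ∀ x, σ x = x ^ q)
    (σ' : F' →+* F') (hσ' : ∀ x, σ' x = x ^ r)
    (h : Nonempty ((SU₂ σ) ≃* (SU₂ σ'))) :
    q = r :=
  stmt_6_general q r F hF F' hF' σ hσ σ' hσ' h
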